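/- Let G be a linear influence game with n players whose weights are symmetric, i.e., w_{ij} = w_{ji} for all distinct i, j. Define Φ : {−1,1}^n → ℝ by Φ(x) = Σ_{t=1}^n x_t·(Σ_{i≠t} x_i w_{it}/2 − b_t). Then for every player j and every choice x_{−j} ∈ {−1,1}^{n−1} of the other players' actions, u_j(1, x_{−j}) − u_j(−1, x_{−j}) = Φ(1, x_{−j}) − Φ(−1, x_{−j}) = 2·(Σ_{i≠j} x_i w_{ij} − b_j); i.e., Φ is an exact potential function for G. -/

import Mathlib

/-!
Only player `j`'s own action changes, so both `u_j` and `Φ` are affine in `x_j` along the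
deviation. In `Φ`, the action `x_j` appears in the `t = j` summand with coefficient
`∑_{i≠j} x_i w_{ij}/2 - b_j` and in every other summand `t` through `x_t x_j w_{jt}/2`; the two
halves add up to `∑_{i≠j} x_i (w_{ij} + w_{ji})/2 - b_j`, which symmetry turns into the slope
`∑_{i≠j} x_i w_{ij} - b_j` of `u_j`.
-/

open Finset Function

theorem sum_apply_update_of_notMem {ι α β : Type*} [DecidableEq ι] [AddCommMonoid β]
    {s : Finset ι} {j : ι} (hj : j ∉ s) (f : ι → α → β) (x : ι → α) (c : α) :
    ∑ i ∈ s, f i (update x j c i) = ∑ i ∈ s, f i (x i) :=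
  sum_congr rfl fun i hi => by rw [update_of_ne (ne_of_mem_of_not_mem hi hj)]

namespace LinearInfluenceGame

variable {ι K : Type*} [Fintype ι] [DecidableEq ι] [Field K]

def payoff (w : ι → ι → K) (b : ι → K) (i : ι) (y : ι → K) : K :=
  y i * ((∑ k ∈ univ.filter (· ≠ i), w k i * y k) - b i)

def potential (w : ι → ι → K) (b : ι → K) (y : ι → K) : K :=
  ∑ t, y t * ((∑ i ∈ univ.filter (· ≠ t), y i * w i t / 2) - b t)

theorem payoff_update_self_sub (w : ι → ι → K) (b : ι → K) (x : ι → K) (j : ι) (c c' : K) :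
    payoff w b j (update x j c) - payoff w b j (update x j c')
      = (c - c') * ((∑ k ∈ univ.filter (· ≠ j), w k j * x k) - b j) := by
  have hj : j ∉ univ.filter (· ≠ j) := by simp
  simp only [payoff, update_self, sum_apply_update_of_notMem hj (fun k v => w k j * v)]
  ring

theorem potential_eq_mul_add (w : ι → ι → K) (b : ι → K) (y : ι → K) (j : ι) :
    potential w b y
      = y j * ((∑ i ∈ univ.filter (· ≠ j), y i * (w i j + w j i) / 2) - b j)
        + ∑ t ∈ univ.erase j,
            y t * ((∑ i ∈ (univ.filter (· ≠ t)).erase j, y i * w i t / 2) - b t) := by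
  have split_inner (t : ι) (ht : t ∈ univ.erase j) : ∑ i ∈ univ.filter (· ≠ t), y i * w i t / 2
      = y j * w j t / 2 + ∑ i ∈ (univ.filter (· ≠ t)).erase j, y i * w i t / 2 :=
    (add_sum_erase _ _ (by simpa [eq_comm] using ne_of_mem_erase ht)).symm
  have cross_terms : ∑ t ∈ univ.erase j, y t * w j t / 2
      = ∑ i ∈ univ.filter (· ≠ j), y i * w j i / 2 := by
    rw [filter_ne']
  calc potential w b y
      = y j * ((∑ i ∈ univ.filter (· ≠ j), y i * w i j / 2) - b j)
        + ∑ t ∈ univ.erase j, (y j * (y t * w j t / 2)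
          + y t * ((∑ i ∈ (univ.filter (· ≠ t)).erase j, y i * w i t / 2) - b t)) := by
        rw [potential, ← add_sum_erase _ _ (mem_univ j)]
        congr 1
        refine sum_congr rfl fun t ht => ?_
        rw [split_inner t ht]
        ring
    _ = _ := by
        rw [sum_add_distrib, ← mul_sum, cross_terms]
        simp only [mul_add, add_div, sum_add_distrib]
        ring

theorem potential_update_sub (w : ι → ι → K) (b : ι → K) (x : ι → K) (j : ι) (c c' : K) :
    potential w b (update x j c) - potential w b (update x j c')
      = (c - c') * ((∑ i ∈ univ.filter (· ≠ j), x i * (w i j + w j i) / 2) - b j) := by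
  have hj : j ∉ univ.filter (· ≠ j) := by simp
  have remainder (c : K) : ∑ t ∈ univ.erase j, update x j c t *
        ((∑ i ∈ (univ.filter (· ≠ t)).erase j, update x j c i * w i t / 2) - b t)
      = ∑ t ∈ univ.erase j,
          x t * ((∑ i ∈ (univ.filter (· ≠ t)).erase j, x i * w i t / 2) - b t) := by
    rw [← sum_apply_update_of_notMem (notMem_erase j univ) (fun t v => v * (_ - b t)) x c]
    refine sum_congr rfl fun t _ => ?_
    rw [sum_apply_update_of_notMem (notMem_erase j _) (fun i v => v * w i t / 2)]
  simp only [potential_eq_mul_add _ _ _ j, remainder, update_self,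
    sum_apply_update_of_notMem hj (fun i v => v * (w i j + w j i) / 2)]
  ring

end LinearInfluenceGame

open LinearInfluenceGame

theorem symmetric_lig_exact_potential (n : ℕ)
    (w : Fin n → Fin n → ℝ) (b : Fin n → ℝ)
    (hsym : ∀ i j : Fin n, i ≠ j → w i j = w j i)
    (j : Fin n) (x : Fin n → ℝ) :
    let Φ : (Fin n → ℝ) → ℝ := fun y =>
      ∑ t, y t * ((∑ i ∈ univ.filter (· ≠ t), y i * w i t / 2) - b t)
    let u : Fin n → (Fin n → ℝ) → ℝ := fun i y =>
      y i * ((∑ k ∈ univ.filter (· ≠ i), w k i * y k) - b i)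
    u j (Function.update x j 1) - u j (Function.update x j (-1))
        = Φ (Function.update x j 1) - Φ (Function.update x j (-1)) ∧
    Φ (Function.update x j 1) - Φ (Function.update x j (-1))
        = 2 * ((∑ i ∈ univ.filter (· ≠ j), x i * w i j) - b j) := by
  have symmetrized : ∑ i ∈ univ.filter (· ≠ j), x i * (w i j + w j i) / 2
      = ∑ i ∈ univ.filter (· ≠ j), x i * w i j :=
    sum_congr rfl fun i hi => by rw [← hsym i j (mem_filter.mp hi).2]; ring
  have potential_diff : potential w b (update x j 1) - potential w b (update x j (-1))
      = 2 * ((∑ i ∈ univ.filter (· ≠ j), x i * w i j) - b j) := by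
    rw [potential_update_sub, symmetrized]
    norm_num
  have payoff_diff : payoff w b j (update x j 1) - payoff w b j (update x j (-1))
      = 2 * ((∑ i ∈ univ.filter (· ≠ j), x i * w i j) - b j) := by
    rw [payoff_update_self_sub]
    simp only [mul_comm (w _ j)]
    norm_num
  exact ⟨payoff_diff.trans potential_diff.symm, potential_diff⟩
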